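/- Let A = {1, a, b} be a probability group with three distinct elements such that a⁻¹ = b. Then A is abelian, i.e. p(x·y=z) = p(y·x=z) for all x, y, z ∈ A. -/

import Mathlib

/-- A probability group (Harrison): a set `A` with a distinguished element `one`,
an inverse map `inv`, and a probability map `p` satisfying axioms (1)-(6). -/
structure ProbabilityGroup (A : Type*) where
  /-- the probability map: `p a b c` is `p(a·b = c)` -/
  p : A → A → A → ℝ
  /-- the unit element -/
  one : A
  /-- the inverse map -/
  inv : A → A
  p_nonneg : ∀ a b c, 0 ≤ p a b c
  finite_support : ∀ a b, {c | p a b c ≠ 0}.Finite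
  sum_eq_one : ∀ a b, ∑ᶠ c, p a b c = 1
  assoc : ∀ a b c d, ∑ᶠ x, p a b x * p x c d = ∑ᶠ y, p a y d * p b c y
  one_mul : ∀ a, p one a a = 1
  mul_one : ∀ a, p a one a = 1
  inv_pos : ∀ a, 0 < p a (inv a) one
  inv_unique : ∀ a b, 0 < p a b one → b = inv a
  p_inv : ∀ a b c, p a b c = p (inv b) (inv a) (inv c)
  inv_symm : ∀ a, p a (inv a) one = p (inv a) a one

/-- The size `s(a) = 1 / p(a·a⁻¹ = 1)` of an element of a probability group. -/
noncomputable def ProbabilityGroup.s {A : Type*} (P : ProbabilityGroup A) (a : A) : ℝ :=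
  1 / P.p a (P.inv a) P.one

/-! In a probability group `1` commutes with everything, since `p(1·y = ·)` and `p(y·1 = ·)` are
both the point mass at `y`. Every product `a·a⁻¹` is distributed symmetrically under `c ↦ c⁻¹`,
because `(a·a⁻¹)⁻¹ = a·a⁻¹` by axiom (5). In `{1, a, a⁻¹}` this forces
`p(a·a⁻¹ = a) = p(a·a⁻¹ = a⁻¹) = (1 - p(a·a⁻¹ = 1)) / 2`, and the same for `a⁻¹·a`; axiom (6)
then makes the two distributions equal. -/

namespace ProbabilityGroup

variable {A : Type*} (P : ProbabilityGroup A)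

theorem inv_inv (a : A) : P.inv (P.inv a) = a :=
  (P.inv_unique _ _ (P.inv_symm a ▸ P.inv_pos a)).symm

theorem sum_eq_one_of_support_subset {x y : A} {s : Finset A}
    (hs : Function.support (P.p x y) ⊆ s) : ∑ c ∈ s, P.p x y c = 1 :=
  (finsum_eq_sum_of_support_subset _ hs).symm.trans (P.sum_eq_one x y)

theorem p_eq_zero_of_eq_one {x y c₀ c : A} (h : P.p x y c₀ = 1) (hc : c ≠ c₀) :
    P.p x y c = 0 := by
  classical
  let s := (P.finite_support x y).toFinset ∪ {c₀, c}
  have hsum : ∑ k ∈ s, P.p x y k = 1 :=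
    P.sum_eq_one_of_support_subset fun k hk => by simp [s, Function.mem_support.mp hk]
  have hle : P.p x y c₀ + P.p x y c ≤ ∑ k ∈ s, P.p x y k :=
    Finset.add_le_sum (fun k _ => P.p_nonneg x y k) (by simp [s]) (by simp [s]) hc.symm
  linarith [P.p_nonneg x y c]

theorem p_one_left_eq_p_one_right (y z : A) : P.p P.one y z = P.p y P.one z := by
  by_cases hz : z = y
  · rw [hz, P.one_mul, P.mul_one]
  · rw [P.p_eq_zero_of_eq_one (P.one_mul y) hz, P.p_eq_zero_of_eq_one (P.mul_one y) hz]

theorem p_mul_inv_inv (a c : A) : P.p a (P.inv a) (P.inv c) = P.p a (P.inv a) c := by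
  rw [P.p_inv a (P.inv a) c, P.inv_inv]

theorem p_mul_inv_eq_p_inv_mul_of_forall_eq_one_or_eq_or_eq_inv {a : A} (ha : a ≠ P.one)
    (ha' : P.inv a ≠ P.one) (ha_ne : a ≠ P.inv a)
    (henum : ∀ x : A, x = P.one ∨ x = a ∨ x = P.inv a) (z : A) :
    P.p a (P.inv a) z = P.p (P.inv a) a z := by
  classical
  have hsum : ∀ x y, P.p x y P.one + P.p x y a + P.p x y (P.inv a) = 1 := fun x y => by
    have h : ∑ c ∈ {P.one, a, P.inv a}, P.p x y c = 1 :=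
      P.sum_eq_one_of_support_subset fun c _ => by simpa using henum c
    rwa [Finset.sum_insert (by simp [ha.symm, ha'.symm]), Finset.sum_insert (by simp [ha_ne]),
      Finset.sum_singleton, ← add_assoc] at h
  have hab := P.p_mul_inv_inv a a
  have hba := P.p_mul_inv_inv (P.inv a) a
  rw [P.inv_inv] at hba
  have hsymm := P.inv_symm a
  have hsum_ab := hsum a (P.inv a)
  have hsum_ba := hsum (P.inv a) a
  rcases henum z with rfl | rfl | rfl <;> linarith

end ProbabilityGroup

/-- A probability group `{1, a, b}` with three distinct elements and `a⁻¹ = b` is abelian. -/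
theorem probabilityGroup_card_three_invPair_abelian {A : Type*} (P : ProbabilityGroup A)
    (a b : A) (ha : a ≠ P.one) (hb : b ≠ P.one) (hab : a ≠ b)
    (henum : ∀ x : A, x = P.one ∨ x = a ∨ x = b)
    (hiab : P.inv a = b) :
    ∀ x y z : A, P.p x y z = P.p y x z := by
  subst hiab
  have hcomm := P.p_mul_inv_eq_p_inv_mul_of_forall_eq_one_or_eq_or_eq_inv ha hb hab henum
  intro x y z
  rcases henum x with rfl | rfl | rfl <;> rcases henum y with rfl | rfl | rfl <;>
    first
      | rfl
      | exact P.p_one_left_eq_p_one_right _ z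
      | exact (P.p_one_left_eq_p_one_right _ z).symm
      | exact hcomm z
      | exact (hcomm z).symm
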